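/- arXiv:2209.15594 — 4 statements merged into one kernel-verified Lean document; each statement's English description precedes it below -/
import Mathlib

section
/- Let α, β > 0 and let X, Y : ℝ → ℝ be differentiable functions with X(t) > 0 for all t, satisfying the ODE system X'(t) = X(t) Y(t) and Y'(t) = α − β X(t)²/2. Then the quantity g(X(t), Y(t)) := h(β X(t)²/(2α)) + Y(t)²/α is constant in t, where h(z) := z − log z − 1. -/
/-!
With `z = βX²/(2α)` the system gives `z' = 2zY`, so `h(z)' = (1 - 1/z) z' = 2(z - 1)Y`, while
`(Y²/α)' = 2Y(α - αz)/α = 2(1 - z)Y`: the two derivatives cancel, and a function with vanishing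
derivative on `ℝ` is constant.
-/

theorem HasDerivAt.sub_log_sub_one {f : ℝ → ℝ} {f' t : ℝ} (hf : HasDerivAt f f' t)
    (hft : f t ≠ 0) :
    HasDerivAt (fun s => f s - Real.log (f s) - 1) ((1 - (f t)⁻¹) * f') t :=
  ((hf.sub (hf.log hft)).sub_const 1).congr_deriv (by ring)

theorem HasDerivAt.const_mul_sq_of_hasDerivAt_mul {X Y : ℝ → ℝ} {t : ℝ} (c : ℝ)
    (hX : HasDerivAt X (X t * Y t) t) :
    HasDerivAt (fun s => c * X s ^ 2) (2 * (c * X t ^ 2) * Y t) t :=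
  ((hX.pow 2).const_mul c).congr_deriv (by simp only [Nat.cast_ofNat]; ring)

/-- For the planar ODE `X' = XY`, `Y' = α − βX²/2` with `α, β > 0` and
`X(t) > 0` for all `t`, the quantity `g(X,Y) := h(βX²/(2α)) + Y²/α` with
`h(z) := z − log z − 1` is constant in `t`. -/
theorem conserved_quantity (α β : ℝ) (hα : 0 < α) (hβ : 0 < β)
    (X Y : ℝ → ℝ) (hXpos : ∀ t, 0 < X t)
    (hX : ∀ t, HasDerivAt X (X t * Y t) t)
    (hY : ∀ t, HasDerivAt Y (α - β * X t ^ 2 / 2) t) :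
    ∀ t₁ t₂ : ℝ,
      (β * X t₁ ^ 2 / (2 * α) - Real.log (β * X t₁ ^ 2 / (2 * α)) - 1) + Y t₁ ^ 2 / α =
      (β * X t₂ ^ 2 / (2 * α) - Real.log (β * X t₂ ^ 2 / (2 * α)) - 1) + Y t₂ ^ 2 / α := by
  set z : ℝ → ℝ := fun t => β / (2 * α) * X t ^ 2
  have hz_pos (t : ℝ) : 0 < z t := by have := hXpos t; positivity
  have hz (t : ℝ) : HasDerivAt z (2 * z t * Y t) t :=
    HasDerivAt.const_mul_sq_of_hasDerivAt_mul _ (hX t)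
  have hY_sq (t : ℝ) : HasDerivAt (fun s => Y s ^ 2 / α) (2 * (1 - z t) * Y t) t :=
    (((hY t).pow 2).div_const α).congr_deriv (by simp only [z, Nat.cast_ofNat]; field_simp; ring)
  have hg (t : ℝ) : HasDerivAt (fun s => (z s - Real.log (z s) - 1) + Y s ^ 2 / α) 0 t :=
    (((hz t).sub_log_sub_one (hz_pos t).ne').add (hY_sq t)).congr_deriv
      (by field_simp [(hz_pos t).ne']; ring)
  intro t₁ t₂
  have hconst := is_const_of_deriv_eq_zero (fun t => (hg t).differentiableAt)
    (fun t => (hg t).deriv) t₁ t₂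
  simpa only [z, div_mul_eq_mul_div] using hconst
end

section
/- Let α, β > 0, set δ := √(2α/β), and let X, Y : [0, ∞) → ℝ be differentiable with X(t) > 0 for all t ≥ 0, satisfying X'(t) = X(t)Y(t) and Y'(t) = α − β X(t)²/2, with initial conditions 0 < X(0) ≤ δ and Y(0) = 0. Then there is an absolute constant C > 0 (independent of α, β, X, Y) such that for all t ≥ 0: X(0) ≤ X(t) ≤ C δ √(1 + log(δ/X(0))) and |Y(t)| ≤ C √(α (1 + log(δ/X(0)))). -/
/-!
Write `z = βX²/(2α) = (X/δ)²`. Along trajectories `h(z) + Y²/α` is conserved, where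
`h(z) = z - log z - 1 ≥ 0` decreases on `(0, 1]`. Since `Y(0) = 0` and `z(0) ≤ 1`,
`h(z(t)) + Y(t)²/α = h(z(0)) ≤ -log z(0) = 2 log(δ/X(0))` for all `t ≥ 0`.
Monotonicity of `h` on `(0, 1]` gives `z(t) ≥ z(0)`, the linear lower bound `h(z) ≥ z/2 - log 2`
bounds `z(t)` from above, and `h ≥ 0` bounds `Y(t)²/α`; the constant `C = 2` suffices.
-/

open Real Set

/-- The paper's `h`. -/
noncomputable def bregmanLog (z : ℝ) : ℝ := z - log z - 1

theorem bregmanLog_nonneg {z : ℝ} (hz : 0 < z) : 0 ≤ bregmanLog z := by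
  unfold bregmanLog
  linarith [log_le_sub_one_of_pos hz]

theorem bregmanLog_le_neg_log {z : ℝ} (hz : z ≤ 1) : bregmanLog z ≤ -log z := by
  unfold bregmanLog
  linarith

theorem half_sub_log_two_le_bregmanLog {z : ℝ} (hz : 0 < z) : z / 2 - log 2 ≤ bregmanLog z := by
  have h := log_le_sub_one_of_pos (half_pos hz)
  rw [log_div hz.ne' two_ne_zero] at h
  unfold bregmanLog
  linarith

theorem bregmanLog_strictAntiOn : StrictAntiOn bregmanLog (Ioc 0 1) := by
  rintro a ⟨ha, -⟩ b ⟨hb, hb1⟩ hab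
  have hlog : log a - log b < a / b - 1 := by
    rw [← log_div ha.ne' hb.ne']
    exact log_lt_sub_one_of_pos (div_pos ha hb) ((div_lt_one hb).2 hab).ne
  have hratio : a / b - 1 ≤ a - b := by
    rw [div_sub_one hb.ne', div_le_iff₀ hb]
    nlinarith
  unfold bregmanLog
  linarith

theorem le_of_bregmanLog_le {a b : ℝ} (ha : 0 < a) (hb : 0 < b) (hb1 : b ≤ 1)
    (h : bregmanLog a ≤ bregmanLog b) : b ≤ a := by
  by_contra! hab
  exact (bregmanLog_strictAntiOn ⟨ha, hab.le.trans hb1⟩ ⟨hb, hb1⟩ hab).not_ge h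

theorem bregmanLog_sq_level_bounds {u₀ u w : ℝ} (hu₀ : 0 < u₀) (hu₀1 : u₀ ≤ 1) (hu : 0 < u)
    (hw : 0 ≤ w) (h : bregmanLog (u ^ 2) + w = bregmanLog (u₀ ^ 2)) :
    u₀ ≤ u ∧ u ≤ 2 * √(1 + log u₀⁻¹) ∧ w ≤ 2 * log u₀⁻¹ := by
  have hu₀sq : u₀ ^ 2 ≤ 1 := pow_le_one₀ hu₀.le hu₀1
  have hlevel : bregmanLog (u₀ ^ 2) ≤ 2 * log u₀⁻¹ := by
    have hlog : -log (u₀ ^ 2) = 2 * log u₀⁻¹ := by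
      rw [log_pow, log_inv]
      push_cast
      ring
    exact hlog ▸ bregmanLog_le_neg_log hu₀sq
  have hℓ : 0 ≤ log u₀⁻¹ := log_nonneg ((one_le_inv₀ hu₀).2 hu₀1)
  have hh : 0 ≤ bregmanLog (u ^ 2) := bregmanLog_nonneg (by positivity)
  refine ⟨?_, ?_, by linarith⟩
  · exact le_of_pow_le_pow_left₀ two_ne_zero hu.le
      (le_of_bregmanLog_le (by positivity) (by positivity) hu₀sq (by linarith))
  · have hlog2 : log 2 < 1 := log_two_lt_d9.trans (by norm_num)
    refine le_of_sq_le_sq ?_ (by positivity)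
    rw [mul_pow, sq_sqrt (by linarith)]
    linarith [half_sub_log_two_le_bregmanLog (pow_pos hu 2)]

/-- The paper's conserved quantity `g`. -/
noncomputable def selfStabInvariant (α β x y : ℝ) : ℝ :=
  bregmanLog (β * x ^ 2 / (2 * α)) + y ^ 2 / α

theorem hasDerivAt_selfStabInvariant {α β t : ℝ} {X Y : ℝ → ℝ} (hα : α ≠ 0) (hβ : β ≠ 0)
    (hXt : X t ≠ 0) (hX : HasDerivAt X (X t * Y t) t) (hY : HasDerivAt Y (α - β * X t ^ 2 / 2) t) :
    HasDerivAt (fun s => selfStabInvariant α β (X s) (Y s)) 0 t := by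
  have hz : HasDerivAt (fun s => β * X s ^ 2 / (2 * α))
      (β * (2 * X t ^ 1 * (X t * Y t)) / (2 * α)) t :=
    ((hX.pow 2).const_mul β).div_const _
  have hz0 : β * X t ^ 2 / (2 * α) ≠ 0 := by positivity
  refine (((hz.sub (hz.log hz0)).sub_const 1).add ((hY.pow 2).div_const α)).congr_deriv ?_
  field_simp
  ring

theorem selfStabInvariant_eq_initial {α β t : ℝ} {X Y : ℝ → ℝ} (hα : α ≠ 0) (hβ : β ≠ 0)
    (hXne : ∀ s, 0 ≤ s → X s ≠ 0) (hX : ∀ s, 0 ≤ s → HasDerivAt X (X s * Y s) s)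
    (hY : ∀ s, 0 ≤ s → HasDerivAt Y (α - β * X s ^ 2 / 2) s) (ht : 0 ≤ t) :
    selfStabInvariant α β (X t) (Y t) = selfStabInvariant α β (X 0) (Y 0) := by
  have hG s (hs : 0 ≤ s) := hasDerivAt_selfStabInvariant hα hβ (hXne s hs) (hX s hs) (hY s hs)
  exact constant_of_has_deriv_right_zero (fun s hs => (hG s hs.1).continuousAt.continuousWithinAt)
    (fun s hs => (hG s hs.1).hasDerivWithinAt) t (right_mem_Icc.2 ht)

theorem mul_sq_div_eq_div_sqrt_sq {α β : ℝ} (hα : 0 < α) (hβ : 0 < β) (x : ℝ) :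
    β * x ^ 2 / (2 * α) = (x / √(2 * α / β)) ^ 2 := by
  rw [div_pow, sq_sqrt (by positivity)]
  field_simp

/-- bounds on the trajectory of the ODE `X' = XY`, `Y' = α − βX²/2`
started at `0 < X(0) ≤ δ := √(2α/β)`, `Y(0) = 0`: there is an absolute constant `C > 0`
such that for all `t ≥ 0`, `X(0) ≤ X(t) ≤ C δ √(1 + log(δ/X(0)))` and
`|Y(t)| ≤ C √(α(1 + log(δ/X(0))))`. -/
theorem ode_trajectory_bounds :
    ∃ C : ℝ, 0 < C ∧
      ∀ α β : ℝ, 0 < α → 0 < β →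
        ∀ X Y : ℝ → ℝ,
          (∀ t : ℝ, 0 ≤ t → 0 < X t) →
          (∀ t : ℝ, 0 ≤ t → HasDerivAt X (X t * Y t) t) →
          (∀ t : ℝ, 0 ≤ t → HasDerivAt Y (α - β * X t ^ 2 / 2) t) →
          0 < X 0 → X 0 ≤ Real.sqrt (2 * α / β) → Y 0 = 0 →
          ∀ t : ℝ, 0 ≤ t →
            X 0 ≤ X t ∧
            X t ≤ C * Real.sqrt (2 * α / β) *
              Real.sqrt (1 + Real.log (Real.sqrt (2 * α / β) / X 0)) ∧
            |Y t| ≤ C * Real.sqrt (α * (1 + Real.log (Real.sqrt (2 * α / β) / X 0))) := by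
  refine ⟨2, two_pos, fun α β hα hβ X Y hXpos hX hY hX0 hX0δ hY0 t ht => ?_⟩
  have hδ : 0 < √(2 * α / β) := by positivity
  have hconserved :=
    selfStabInvariant_eq_initial hα.ne' hβ.ne' (fun s hs => (hXpos s hs).ne') hX hY ht
  simp only [selfStabInvariant, mul_sq_div_eq_div_sqrt_sq hα hβ, hY0] at hconserved
  obtain ⟨hlow, hup, hY2⟩ := bregmanLog_sq_level_bounds (div_pos hX0 hδ) ((div_le_one hδ).2 hX0δ)
    (div_pos (hXpos t ht) hδ) (div_nonneg (sq_nonneg (Y t)) hα.le) (by simpa using hconserved)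
  rw [inv_div] at hup hY2
  refine ⟨(div_le_div_iff_of_pos_right hδ).1 hlow, ?_, ?_⟩
  · rwa [div_le_iff₀' hδ, ← mul_assoc, mul_comm _ (2 : ℝ)] at hup
  · have hℓ : 0 ≤ log (√(2 * α / β) / X 0) := log_nonneg ((one_le_div hX0).2 hX0δ)
    refine abs_le_of_sq_le_sq ?_ (by positivity)
    rw [div_le_iff₀' hα] at hY2
    rw [mul_pow, sq_sqrt (mul_nonneg hα.le (by linarith))]
    nlinarith
end

section
/- Let η, α, β > 0 and set δ := √(2α/β). Consider the map T(x, y) = (−(1 + ηy)x, y + η(α − β x²/2)) on ℝ². Then the points (x₀, y₀) with x₀ ≠ 0 and 1 + ηy₀ > 0 and 1 + ηy₁ > 0 (where (x₁,y₁) = T(x₀,y₀)) that satisfy T(T(x₀, y₀)) = (x₀, y₀) are exactly (x₀, y₀) = (δ, 0) and (x₀, y₀) = (−δ, 0). -/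
/-!
Write `a = 1 + η y₀` and `b = 1 + η y₁` for the two multipliers along the orbit. Returning in the
`x`-coordinate forces `a b = 1`, and returning in the `y`-coordinate forces the two sharpness
increments to cancel, `β (x₀² + x₁²) = 4 α` with `x₁ = -a x₀`. Since `b = a + η² (α - β x₀² / 2)`,
the two conditions combine to `(a² - 1) (1 + a η² β x₀² / 4) = 0`; for `a > 0` the second factor is
positive, so `a = 1`, i.e. `y₀ = 0`, and then `β x₀² = 2 α`.
-/

theorem Real.sq_eq_iff_eq_sqrt_or_eq_neg_sqrt {x c : ℝ} (hc : 0 ≤ c) :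
    x ^ 2 = c ↔ x = √c ∨ x = -√c := by
  rw [← abs_eq (Real.sqrt_nonneg c), ← Real.sqrt_sq_eq_abs, Real.sqrt_inj (sq_nonneg x) hc]

noncomputable def eosMap (η α β : ℝ) (p : ℝ × ℝ) : ℝ × ℝ :=
  (-(1 + η * p.2) * p.1, p.2 + η * (α - β * p.1 ^ 2 / 2))

section PeriodTwo

variable {η α β x y : ℝ}

theorem eosMap_eosMap_eq_self_iff (hη : η ≠ 0) (hx : x ≠ 0) :
    eosMap η α β (eosMap η α β (x, y)) = (x, y) ↔
      (1 + η * y) * (1 + η * y + η ^ 2 * (α - β * x ^ 2 / 2)) = 1 ∧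
        β * (1 + (1 + η * y) ^ 2) * x ^ 2 = 4 * α := by
  have hfst : (1 + η * (y + η * (α - β * x ^ 2 / 2))) * (1 + η * y) * x = x ↔
      (1 + η * y) * (1 + η * y + η ^ 2 * (α - β * x ^ 2 / 2)) = 1 := by
    rw [mul_eq_right₀ hx]
    constructor <;> intro h <;> linear_combination h
  have hsnd : y + η * (α - β * x ^ 2 / 2) + η * (α - β * ((1 + η * y) * x) ^ 2 / 2) = y ↔
      β * (1 + (1 + η * y) ^ 2) * x ^ 2 = 4 * α := by
    have hdiff : y + η * (α - β * x ^ 2 / 2) + η * (α - β * ((1 + η * y) * x) ^ 2 / 2) - y =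
        -(η / 2) * (β * (1 + (1 + η * y) ^ 2) * x ^ 2 - 4 * α) := by ring
    rw [← sub_eq_zero, hdiff]
    simp [hη, sub_eq_zero]
  simp only [eosMap, Prod.ext_iff, neg_mul, neg_neg, mul_neg, neg_sq, ← hfst, ← hsnd]
  constructor <;> rintro ⟨h₁, h₂⟩ <;> refine ⟨?_, h₂⟩ <;> linear_combination h₁

theorem eosMap_period_two_conditions_iff (hη : η ≠ 0) (hβ : 0 < β) (hy : 0 < 1 + η * y) :
    ((1 + η * y) * (1 + η * y + η ^ 2 * (α - β * x ^ 2 / 2)) = 1 ∧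
        β * (1 + (1 + η * y) ^ 2) * x ^ 2 = 4 * α) ↔
      y = 0 ∧ β * x ^ 2 = 2 * α := by
  set a := 1 + η * y
  constructor
  · rintro ⟨hprod, hsum⟩
    have hfactor : (a ^ 2 - 1) * (1 + a * η ^ 2 * β * x ^ 2 / 4) = 0 := by
      linear_combination hprod + a * η ^ 2 / 4 * hsum
    have hpos : 0 < 1 + a * η ^ 2 * β * x ^ 2 / 4 := by positivity
    have ha1 : a = 1 := by
      have hsq : a ^ 2 = 1 ^ 2 := by linarith [(mul_eq_zero.1 hfactor).resolve_right hpos.ne']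
      exact (pow_left_inj₀ hy.le zero_le_one two_ne_zero).1 hsq
    have hy0 : y = 0 := by
      simpa [hη] using (show η * y = 0 by linarith)
    refine ⟨hy0, ?_⟩
    rw [ha1] at hsum
    linarith
  · rintro ⟨rfl, hx⟩
    exact ⟨by linear_combination -(η ^ 2) / 2 * hx, by linear_combination 2 * hx⟩

end PeriodTwo

/-- the period-2 points of the simplified edge-of-stability map
`T(x,y) = (−(1+ηy)x, y + η(α − βx²/2))` with `x₀ ≠ 0`, `1 + ηy₀ > 0` and `1 + ηy₁ > 0`
are exactly `(δ, 0)` and `(−δ, 0)`, where `δ := √(2α/β)`. -/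
theorem period_two_orbits (η α β : ℝ) (hη : 0 < η) (hα : 0 < α) (hβ : 0 < β)
    (T : ℝ × ℝ → ℝ × ℝ)
    (hT : ∀ x y : ℝ, T (x, y) = (-(1 + η * y) * x, y + η * (α - β * x ^ 2 / 2))) :
    ∀ x₀ y₀ : ℝ, x₀ ≠ 0 → 0 < 1 + η * y₀ → 0 < 1 + η * (T (x₀, y₀)).2 →
      (T (T (x₀, y₀)) = (x₀, y₀) ↔
        (x₀ = Real.sqrt (2 * α / β) ∧ y₀ = 0) ∨
        (x₀ = -Real.sqrt (2 * α / β) ∧ y₀ = 0)) := by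
  intro x₀ y₀ hx hy _
  obtain rfl : T = eosMap η α β := funext fun p => hT p.1 p.2
  have hx_sq : β * x₀ ^ 2 = 2 * α ↔ x₀ ^ 2 = 2 * α / β := by
    rw [eq_div_iff hβ.ne', mul_comm]
  rw [eosMap_eosMap_eq_self_iff hη.ne' hx, eosMap_period_two_conditions_iff hη.ne' hβ hy, hx_sq,
    Real.sq_eq_iff_eq_sqrt_or_eq_neg_sqrt (by positivity)]
  tauto
end

section
/- Let η, α, β > 0 and define L : ℝ³ → ℝ by L(x, y, z) = (2/η + √β · y) x²/2 − (α/√β) y − z. Let p = (0, y₀, z₀) be any point with first coordinate 0 such that 2/η + √β y₀ > 0. Then: (i) ∇L(p) = (0, −α/√β, −1); (ii) the Hessian ∇²L(p) equals (2/η + √β y₀) e₁ e₁ᵀ, so its largest eigenvalue is S(p) = 2/η + √β y₀, it is simple, and e₁ = (1,0,0) is the unit top eigenvector; (iii) the gradient of the sharpness is ∇S(p) = (0, √β, 0); (iv) the progressive sharpening coefficient satisfies −∇L(p) · ∇S(p) = α; and (v) ‖∇S(p)‖² = β and ∇S(p) ⊥ e₁. -/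
/-!
At `θ = (x, y, z)` the Hessian of the toy loss is `[[a, b, 0], [b, 0, 0], [0, 0, 0]]` with
`a = 2/η + √β y` and `b = √β x`, so the sharpness is the larger root `(a + √(a² + 4b²)) / 2` of
`t² = a t + b²` (the other eigenvalues being `≤ 0`). On the open set `a > 0` this formula is
smooth in `(a, b)`; on the plane `x = 0` it equals `a` and its derivative in `b` vanishes, so
`∇S = ∇a = (0, √β, 0)` there.
-/

open scoped RealInnerProductSpace

/-- The sharpness `S(θ)`: the largest eigenvalue of the Hessian `∇²L(θ)`, expressed as the
supremum of the Rayleigh quotient of the second derivative over unit vectors. -/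
noncomputable def sharpness {d : ℕ} (L : EuclideanSpace ℝ (Fin d) → ℝ)
    (θ : EuclideanSpace ℝ (Fin d)) : ℝ :=
  sSup {r : ℝ | ∃ v : EuclideanSpace ℝ (Fin d), ‖v‖ = 1 ∧ iteratedFDeriv ℝ 2 L θ ![v, v] = r}

/-- The larger eigenvalue of the symmetric matrix `[[a, b], [b, 0]]`. -/
noncomputable def topEigenvalue (a b : ℝ) : ℝ := (a + √(a ^ 2 + 4 * b ^ 2)) / 2

section topEigenvalue

variable (a b : ℝ)

theorem topEigenvalue_sq : topEigenvalue a b ^ 2 = a * topEigenvalue a b + b ^ 2 := by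
  have := Real.sq_sqrt (by positivity : 0 ≤ a ^ 2 + 4 * b ^ 2)
  unfold topEigenvalue
  linear_combination this / 4

theorem abs_le_sqrt_sq_add_four_mul_sq : |a| ≤ √(a ^ 2 + 4 * b ^ 2) :=
  Real.abs_le_sqrt (by nlinarith [sq_nonneg b])

theorem topEigenvalue_nonneg : 0 ≤ topEigenvalue a b := by
  have := abs_le_sqrt_sq_add_four_mul_sq a b
  unfold topEigenvalue
  linarith [neg_abs_le a]

theorem le_topEigenvalue : a ≤ topEigenvalue a b := by
  have := abs_le_sqrt_sq_add_four_mul_sq a b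
  unfold topEigenvalue
  linarith [le_abs_self a]

theorem topEigenvalue_pos {a : ℝ} (ha : 0 < a) : 0 < topEigenvalue a b :=
  ha.trans_le (le_topEigenvalue a b)

theorem topEigenvalue_zero_right {a : ℝ} (ha : 0 ≤ a) : topEigenvalue a 0 = a := by
  simp [topEigenvalue, Real.sqrt_sq ha]

theorem quadratic_le_topEigenvalue {x y : ℝ} (hxy : x ^ 2 + y ^ 2 ≤ 1) :
    a * x ^ 2 + 2 * b * x * y ≤ topEigenvalue a b := by
  have ht := topEigenvalue_sq a b
  have ha := le_topEigenvalue a b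
  rcases (topEigenvalue_nonneg a b).eq_or_lt with h0 | h0
  · obtain rfl : b = 0 := by nlinarith
    nlinarith [sq_nonneg x]
  · -- `t (t (x² + y²) - a x² - 2bxy) = (bx - ty)²` because `t² - a t = b²`
    have key : topEigenvalue a b *
          (topEigenvalue a b * (x ^ 2 + y ^ 2) - (a * x ^ 2 + 2 * b * x * y)) =
        (b * x - topEigenvalue a b * y) ^ 2 := by
      linear_combination x ^ 2 * ht
    have := nonneg_of_mul_nonneg_right (key ▸ sq_nonneg _) h0
    nlinarith

theorem exists_quadratic_eq_topEigenvalue {a : ℝ} (ha : 0 < a) :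
    ∃ x y : ℝ, x ^ 2 + y ^ 2 = 1 ∧ a * x ^ 2 + 2 * b * x * y = topEigenvalue a b := by
  have ht := topEigenvalue_sq a b
  have hn : 0 < topEigenvalue a b ^ 2 + b ^ 2 := by
    have := topEigenvalue_pos b ha
    positivity
  have hn2 := Real.sq_sqrt hn.le
  have hn0 := (Real.sqrt_pos.2 hn).ne'
  refine ⟨topEigenvalue a b / √(topEigenvalue a b ^ 2 + b ^ 2),
    b / √(topEigenvalue a b ^ 2 + b ^ 2), ?_, ?_⟩
  · field_simp
    linarith
  · field_simp
    linear_combination -topEigenvalue a b * hn2 - topEigenvalue a b * ht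

end topEigenvalue

theorem HasFDerivAt.topEigenvalue {E : Type*} [NormedAddCommGroup E] [NormedSpace ℝ E]
    {f g : E → ℝ} {f' g' : E →L[ℝ] ℝ} {x : E} (hf : HasFDerivAt f f' x)
    (hg : HasFDerivAt g g' x) (hfx : 0 < f x) (hgx : g x = 0) :
    HasFDerivAt (fun y => topEigenvalue (f y) (g y)) f' x := by
  have hs := ((hf.pow 2).add ((hg.pow 2).const_mul 4)).sqrt (by simp [hgx, hfx.ne'])
  refine (((hf.add hs).mul_const 2⁻¹).congr_fderiv ?_).congr_of_eventuallyEq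
    (.of_eq <| funext fun y => ?_)
  · ext v
    simp only [Pi.add_apply, hgx, ne_eq, OfNat.ofNat_ne_zero, not_false_eq_true, zero_pow,
      mul_zero, add_zero, Real.sqrt_sq hfx.le, one_div, mul_inv_rev, Nat.add_one_sub_one, pow_one,
      nsmul_eq_mul, Nat.cast_ofNat, zero_smul, smul_zero, smul_add, add_apply,
      smul_apply, smul_eq_mul]
    field_simp
    ring
  · simp only [_root_.topEigenvalue, Pi.add_apply]
    ring

theorem EuclideanSpace.eq_smul_single_of_inner_eq {ι : Type*} [Fintype ι] [DecidableEq ι]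
    {v : EuclideanSpace ℝ ι} {i : ι} (h : ∀ w, ⟪v, w⟫ = v i * w i) :
    v = v i • EuclideanSpace.single i 1 := by
  ext j
  by_cases hj : j = i
  · simp [hj]
  · simpa [EuclideanSpace.inner_single_right, hj] using h (EuclideanSpace.single j 1)

theorem EuclideanSpace.hasFDerivAt_apply {ι : Type*} [Fintype ι] (θ : EuclideanSpace ℝ ι) (i : ι) :
    HasFDerivAt (fun θ : EuclideanSpace ℝ ι => θ i)
      (EuclideanSpace.proj i : EuclideanSpace ℝ ι →L[ℝ] ℝ) θ :=
  PiLp.hasFDerivAt_apply 2 θ i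

local notation "E3" => EuclideanSpace ℝ (Fin 3)
local notation "π" i => (EuclideanSpace.proj i : E3 →L[ℝ] ℝ)

/-- The paper's toy loss is `toyLoss (2 / η) √β (α / √β)`. -/
noncomputable def toyLoss (c k m : ℝ) (θ : E3) : ℝ :=
  (c + k * θ 1) * θ 0 ^ 2 / 2 - m * θ 1 - θ 2

namespace toyLoss

variable (c k m : ℝ)

theorem hasFDerivAt (θ : E3) :
    HasFDerivAt (toyLoss c k m)
      (((c + k * θ 1) * θ 0) • (π 0) + (k / 2 * θ 0 ^ 2 - m) • (π 1) - (π 2)) θ := by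
  have h := ((((EuclideanSpace.hasFDerivAt_apply θ 1).const_mul k).const_add c).mul
    ((EuclideanSpace.hasFDerivAt_apply θ 0).pow 2)).mul_const 2⁻¹ |>.sub
    ((EuclideanSpace.hasFDerivAt_apply θ 1).const_mul m) |>.sub
    (EuclideanSpace.hasFDerivAt_apply θ 2)
  refine (h.congr_fderiv ?_).congr_of_eventuallyEq (.of_eq <| funext fun θ => ?_)
  · ext v
    simp only [sub_apply, add_apply, smul_apply, PiLp.proj_apply, smul_eq_mul, nsmul_eq_mul,
      Nat.add_one_sub_one, pow_one, Nat.cast_ofNat]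
    ring
  · simp only [toyLoss, Pi.sub_apply, Pi.mul_apply]
    ring

theorem fderiv_eq : fderiv ℝ (toyLoss c k m) = fun θ =>
    ((c + k * θ 1) * θ 0) • (π 0) + (k / 2 * θ 0 ^ 2 - m) • (π 1) - (π 2) :=
  funext fun θ => (hasFDerivAt c k m θ).fderiv

theorem hasFDerivAt_fderiv (θ : E3) :
    HasFDerivAt (fderiv ℝ (toyLoss c k m))
      (((c + k * θ 1) • (π 0) + (k * θ 0) • (π 1)).smulRight (π 0) +
        ((k * θ 0) • (π 0)).smulRight (π 1)) θ := by
  rw [fderiv_eq]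
  have h := ((((EuclideanSpace.hasFDerivAt_apply θ 1).const_mul k).const_add c).mul
    (EuclideanSpace.hasFDerivAt_apply θ 0)).smul_const (π 0) |>.add
    ((((EuclideanSpace.hasFDerivAt_apply θ 0).pow 2).const_mul (k / 2)).sub_const m
      |>.smul_const (π 1))
    |>.sub_const (π 2)
  refine h.congr_fderiv ?_
  ext u v
  simp only [add_apply, ContinuousLinearMap.smulRight_apply, smul_apply, PiLp.proj_apply,
    smul_eq_mul, nsmul_eq_mul, Nat.add_one_sub_one, pow_one, Nat.cast_ofNat]
  ring

theorem iteratedFDeriv_two_apply (θ u v : E3) :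
    iteratedFDeriv ℝ 2 (toyLoss c k m) θ ![u, v] =
      (c + k * θ 1) * (u 0 * v 0) + k * θ 0 * (u 1 * v 0 + u 0 * v 1) := by
  rw [_root_.iteratedFDeriv_two_apply, (hasFDerivAt_fderiv c k m θ).fderiv]
  simp only [add_apply, ContinuousLinearMap.smulRight_apply, smul_apply, PiLp.proj_apply,
    smul_eq_mul, Matrix.cons_val_zero, Matrix.cons_val_one, Matrix.cons_val_fin_one]
  ring

theorem hasGradientAt {θ : E3} (h0 : θ 0 = 0) :
    HasGradientAt (toyLoss c k m) !₂[0, -m, -1] θ := by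
  rw [hasGradientAt_iff_hasFDerivAt]
  refine (hasFDerivAt c k m θ).congr_fderiv ?_
  ext v
  simp [h0, PiLp.inner_apply, Fin.sum_univ_three, mul_comm, sub_eq_add_neg]

theorem sharpness_eq {θ : E3} (hθ : 0 < c + k * θ 1) :
    sharpness (toyLoss c k m) θ = topEigenvalue (c + k * θ 1) (k * θ 0) := by
  refine IsGreatest.csSup_eq ⟨?_, ?_⟩
  · obtain ⟨x, y, hxy, hval⟩ := exists_quadratic_eq_topEigenvalue (k * θ 0) hθ
    refine ⟨!₂[x, y, 0], ?_, ?_⟩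
    · rw [← pow_eq_one_iff_of_nonneg (norm_nonneg _) two_ne_zero, EuclideanSpace.real_norm_sq_eq]
      simpa [Fin.sum_univ_three] using hxy
    · rw [iteratedFDeriv_two_apply, ← hval]
      simp only [Matrix.cons_val_zero, Matrix.cons_val_one]
      ring
  · rintro _ ⟨u, hu, rfl⟩
    have hu2 := EuclideanSpace.real_norm_sq_eq u
    rw [hu, Fin.sum_univ_three] at hu2
    have := quadratic_le_topEigenvalue (c + k * θ 1) (k * θ 0) (x := u 0) (y := u 1)
      (by nlinarith [sq_nonneg (u 2)])
    rw [iteratedFDeriv_two_apply]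
    linarith

theorem hasGradientAt_sharpness {θ : E3} (h0 : θ 0 = 0) (hθ : 0 < c + k * θ 1) :
    HasGradientAt (sharpness (toyLoss c k m)) !₂[0, k, 0] θ := by
  have heq : sharpness (toyLoss c k m) =ᶠ[nhds θ]
      fun θ => topEigenvalue (c + k * θ 1) (k * θ 0) :=
    Filter.mem_of_superset ((isOpen_lt continuous_const
      (by fun_prop : Continuous fun θ : E3 => c + k * θ 1)).mem_nhds hθ)
      fun _ hθ' => sharpness_eq c k m hθ'
  rw [hasGradientAt_iff_hasFDerivAt]
  refine ((HasFDerivAt.topEigenvalue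
    (((EuclideanSpace.hasFDerivAt_apply θ 1).const_mul k).const_add c)
    ((EuclideanSpace.hasFDerivAt_apply θ 0).const_mul k) hθ (by simp [h0])).congr_fderiv ?_)
    |>.congr_of_eventuallyEq heq
  ext v
  simp [PiLp.inner_apply, Fin.sum_univ_three, mul_comm]

end toyLoss

theorem toy_model_self_stabilization_general (η α β : ℝ) (hβ : 0 < β)
    (L : EuclideanSpace ℝ (Fin 3) → ℝ)
    (hLdef : ∀ θ : EuclideanSpace ℝ (Fin 3),
      L θ = (2 / η + Real.sqrt β * θ 1) * (θ 0) ^ 2 / 2 - α / Real.sqrt β * θ 1 - θ 2)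
    (y₀ z₀ : ℝ) (p : EuclideanSpace ℝ (Fin 3))
    (hp : p = (WithLp.equiv 2 (Fin 3 → ℝ)).symm ![0, y₀, z₀])
    (hpos : 0 < 2 / η + Real.sqrt β * y₀) :
    -- (i) the gradient of `L` at `p`
    gradient L p = (WithLp.equiv 2 (Fin 3 → ℝ)).symm ![0, -α / Real.sqrt β, -1] ∧
    -- (ii) the Hessian at `p` is `(2/η + √β y₀) e₁e₁ᵀ` ...
    (∀ v w : EuclideanSpace ℝ (Fin 3),
      iteratedFDeriv ℝ 2 L p ![v, w] = (2 / η + Real.sqrt β * y₀) * (v 0 * w 0)) ∧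
    -- ... with largest eigenvalue `S(p) = 2/η + √β y₀` ...
    sharpness L p = 2 / η + Real.sqrt β * y₀ ∧
    -- ... `e₁` a unit top eigenvector ...
    ‖(EuclideanSpace.single (0 : Fin 3) (1 : ℝ))‖ = 1 ∧
    (∀ w : EuclideanSpace ℝ (Fin 3),
      iteratedFDeriv ℝ 2 L p ![EuclideanSpace.single (0 : Fin 3) (1 : ℝ), w] =
        (2 / η + Real.sqrt β * y₀) * ⟪EuclideanSpace.single (0 : Fin 3) (1 : ℝ), w⟫) ∧
    -- ... and the top eigenvalue simple (every eigenvector is a multiple of `e₁`)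
    (∀ v : EuclideanSpace ℝ (Fin 3),
      (∀ w, iteratedFDeriv ℝ 2 L p ![v, w] = (2 / η + Real.sqrt β * y₀) * ⟪v, w⟫) →
        ∃ c : ℝ, v = c • EuclideanSpace.single (0 : Fin 3) (1 : ℝ)) ∧
    -- (iii) the sharpness is differentiable at `p` with gradient `∇S(p) = (0, √β, 0)`
    HasGradientAt (sharpness L)
      ((WithLp.equiv 2 (Fin 3 → ℝ)).symm ![0, Real.sqrt β, 0]) p ∧
    -- (iv) the progressive sharpening coefficient is `α`
    -⟪(WithLp.equiv 2 (Fin 3 → ℝ)).symm ![0, -α / Real.sqrt β, -1],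
        (WithLp.equiv 2 (Fin 3 → ℝ)).symm ![0, Real.sqrt β, 0]⟫ = α ∧
    -- (v) `‖∇S(p)‖² = β` and `∇S(p) ⊥ e₁`
    ‖(WithLp.equiv 2 (Fin 3 → ℝ)).symm ![0, Real.sqrt β, 0]‖ ^ 2 = β ∧
    ⟪(WithLp.equiv 2 (Fin 3 → ℝ)).symm ![0, Real.sqrt β, 0],
        EuclideanSpace.single (0 : Fin 3) (1 : ℝ)⟫ = 0 := by
  obtain rfl : L = toyLoss (2 / η) √β (α / √β) := funext hLdef
  have hp0 : p 0 = 0 := by subst hp; rfl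
  have hp1 : p 1 = y₀ := by subst hp; rfl
  have hpos' : 0 < 2 / η + √β * p 1 := hp1 ▸ hpos
  have hHess : ∀ v w : E3, iteratedFDeriv ℝ 2 (toyLoss (2 / η) √β (α / √β)) p ![v, w] =
      (2 / η + √β * y₀) * (v 0 * w 0) := by
    intro v w
    simp [toyLoss.iteratedFDeriv_two_apply, hp0, hp1]
  refine ⟨?_, hHess, ?_, by simp, ?_, ?_, ?_, ?_, ?_, by simp [EuclideanSpace.inner_single_right]⟩
  · rw [neg_div]
    exact (toyLoss.hasGradientAt _ _ _ hp0).gradient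
  · rw [toyLoss.sharpness_eq _ _ _ hpos', hp0, hp1, mul_zero, topEigenvalue_zero_right hpos.le]
  · intro w
    rw [hHess, EuclideanSpace.inner_single_left]
    simp
  · intro v hv
    exact ⟨v 0, EuclideanSpace.eq_smul_single_of_inner_eq fun w =>
      mul_left_cancel₀ hpos.ne' ((hv w).symm.trans (hHess v w))⟩
  · exact toyLoss.hasGradientAt_sharpness _ _ _ hp0 hpos'
  · have : √β ≠ 0 := (Real.sqrt_pos.2 hβ).ne'
    simp [PiLp.inner_apply, Fin.sum_univ_three, neg_div, mul_div_cancel₀ α this]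
  · rw [EuclideanSpace.real_norm_sq_eq]
    simp [Fin.sum_univ_three, Real.sq_sqrt hβ.le]

/-- Toy model for self-stabilization: for
`L(x,y,z) = (2/η + √β·y)x²/2 − (α/√β)y − z` on `ℝ³` and any point `p = (0, y₀, z₀)` with
`2/η + √β y₀ > 0`:
(i) `∇L(p) = (0, −α/√β, −1)`;
(ii) `∇²L(p) = (2/η + √β y₀) e₁e₁ᵀ`, its largest eigenvalue is `S(p) = 2/η + √β y₀`,
it is simple, and `e₁` is the unit top eigenvector;
(iii) `∇S(p) = (0, √β, 0)`;
(iv) `−∇L(p)·∇S(p) = α`;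
(v) `‖∇S(p)‖² = β` and `∇S(p) ⊥ e₁`. -/
theorem toy_model_self_stabilization (η α β : ℝ) (hη : 0 < η) (hα : 0 < α) (hβ : 0 < β)
    (L : EuclideanSpace ℝ (Fin 3) → ℝ)
    (hLdef : ∀ θ : EuclideanSpace ℝ (Fin 3),
      L θ = (2 / η + Real.sqrt β * θ 1) * (θ 0) ^ 2 / 2 - α / Real.sqrt β * θ 1 - θ 2)
    (y₀ z₀ : ℝ) (p : EuclideanSpace ℝ (Fin 3))
    (hp : p = (WithLp.equiv 2 (Fin 3 → ℝ)).symm ![0, y₀, z₀])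
    (hpos : 0 < 2 / η + Real.sqrt β * y₀) :
    -- (i) the gradient of `L` at `p`
    gradient L p = (WithLp.equiv 2 (Fin 3 → ℝ)).symm ![0, -α / Real.sqrt β, -1] ∧
    -- (ii) the Hessian at `p` is `(2/η + √β y₀) e₁e₁ᵀ` ...
    (∀ v w : EuclideanSpace ℝ (Fin 3),
      iteratedFDeriv ℝ 2 L p ![v, w] = (2 / η + Real.sqrt β * y₀) * (v 0 * w 0)) ∧
    -- ... with largest eigenvalue `S(p) = 2/η + √β y₀` ...
    sharpness L p = 2 / η + Real.sqrt β * y₀ ∧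
    -- ... `e₁` a unit top eigenvector ...
    ‖(EuclideanSpace.single (0 : Fin 3) (1 : ℝ))‖ = 1 ∧
    (∀ w : EuclideanSpace ℝ (Fin 3),
      iteratedFDeriv ℝ 2 L p ![EuclideanSpace.single (0 : Fin 3) (1 : ℝ), w] =
        (2 / η + Real.sqrt β * y₀) * ⟪EuclideanSpace.single (0 : Fin 3) (1 : ℝ), w⟫) ∧
    -- ... and the top eigenvalue simple (every eigenvector is a multiple of `e₁`)
    (∀ v : EuclideanSpace ℝ (Fin 3),
      (∀ w, iteratedFDeriv ℝ 2 L p ![v, w] = (2 / η + Real.sqrt β * y₀) * ⟪v, w⟫) →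
        ∃ c : ℝ, v = c • EuclideanSpace.single (0 : Fin 3) (1 : ℝ)) ∧
    -- (iii) the sharpness is differentiable at `p` with gradient `∇S(p) = (0, √β, 0)`
    HasGradientAt (sharpness L)
      ((WithLp.equiv 2 (Fin 3 → ℝ)).symm ![0, Real.sqrt β, 0]) p ∧
    -- (iv) the progressive sharpening coefficient is `α`
    -⟪(WithLp.equiv 2 (Fin 3 → ℝ)).symm ![0, -α / Real.sqrt β, -1],
        (WithLp.equiv 2 (Fin 3 → ℝ)).symm ![0, Real.sqrt β, 0]⟫ = α ∧
    -- (v) `‖∇S(p)‖² = β` and `∇S(p) ⊥ e₁`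
    ‖(WithLp.equiv 2 (Fin 3 → ℝ)).symm ![0, Real.sqrt β, 0]‖ ^ 2 = β ∧
    ⟪(WithLp.equiv 2 (Fin 3 → ℝ)).symm ![0, Real.sqrt β, 0],
        EuclideanSpace.single (0 : Fin 3) (1 : ℝ)⟫ = 0 :=
  toy_model_self_stabilization_general η α β hβ L hLdef y₀ z₀ p hp hpos
end
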